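/- Let a, b be probability vectors on finite sets, C a cost matrix, and (f, g) optimal Kantorovich dual potentials for OT(a,b,C) = max_{f_i + g_j ≤ C_{ij}} ⟨f,a⟩ + ⟨g,b⟩. For an outlier point z with cost row c_z, perturbed source ã = ζ a + (1−ζ) e_z (0 ≤ ζ ≤ 1), and any index y* in the support of b, one has OT(ã, b, C̃) ≥ ζ OT(a,b,C) + (1−ζ)(c_z(y*) − g(y*) + ⟨g, b⟩), where C̃ extends C with row c_z, provided c_z(y*) − g(y*) = min_j (c_z(j) − g(j)). -/
import Mathlib


open scoped BigOperators

/-- Balanced OT in Kantorovich dual form: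
`OT(a,b,C) = sup_{f_i + g_j ≤ C_{ij}} ⟨f,a⟩ + ⟨g,b⟩`. -/
noncomputable def OTdual {ι κ : Type*} [Fintype ι] [Fintype κ]
    (a : ι → ℝ) (b : κ → ℝ) (C : ι → κ → ℝ) : ℝ :=
  sSup { v | ∃ (f : ι → ℝ) (g : κ → ℝ), (∀ i j, f i + g j ≤ C i j) ∧
    v = (∑ i, f i * a i) + (∑ j, g j * b j) }

lemma OTdual_bdd {ι κ : Type*} [Fintype ι] [Fintype κ]
    (a : ι → ℝ) (b : κ → ℝ) (ha : ∀ i, 0 ≤ a i) (hb : ∀ j, 0 ≤ b j)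
    (hsa : ∑ i, a i = 1) (hsb : ∑ j, b j = 1) (C : ι → κ → ℝ) :
    BddAbove { v | ∃ (f : ι → ℝ) (g : κ → ℝ), (∀ i j, f i + g j ≤ C i j) ∧
      v = (∑ i, f i * a i) + (∑ j, g j * b j) } := by
  refine ⟨∑ i, ∑ j, C i j * (a i * b j), ?_⟩
  rintro v ⟨f, g, hfg, rfl⟩
  have key : (∑ i, f i * a i) + (∑ j, g j * b j)
      = ∑ i, ∑ j, (f i + g j) * (a i * b j) := by
    have h : ∀ i, ∑ j, (f i + g j) * (a i * b j)
        = f i * a i + (∑ j, g j * b j) * a i := by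
      intro i
      have : ∀ j, (f i + g j) * (a i * b j)
          = f i * a i * b j + (g j * b j) * a i := by intro j; ring
      simp only [this, Finset.sum_add_distrib, ← Finset.sum_mul, ← Finset.mul_sum, hsb]
      ring
    simp only [h, Finset.sum_add_distrib, ← Finset.mul_sum, hsa]
    ring
  rw [key]
  refine Finset.sum_le_sum fun i _ => Finset.sum_le_sum fun j _ => ?_
  exact mul_le_mul_of_nonneg_right (hfg i j) (mul_nonneg (ha i) (hb j))

/-- Lower bound on balanced OT after perturbing the source by a Dirac outlier `z`:
`OT(ã,b,C̃) ≥ ζ OT(a,b,C) + (1−ζ)(c_z(y*) − g(y*) + ⟨g,b⟩)` where `(f,g)` are optimal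
dual potentials and the c-transform `min_j (c_z(j) − g(j))` is attained at `y*` in the
support of `b`. -/
theorem ot_outlier_lower_bound (n p : ℕ) (ζ : ℝ) (hζ0 : 0 ≤ ζ) (hζ1 : ζ ≤ 1)
    (a : Fin n → ℝ) (b : Fin p → ℝ) (ha : ∀ i, 0 ≤ a i) (hb : ∀ j, 0 ≤ b j)
    (hsa : ∑ i, a i = 1) (hsb : ∑ j, b j = 1)
    (C : Fin n → Fin p → ℝ) (cz : Fin p → ℝ)
    (f : Fin n → ℝ) (g : Fin p → ℝ)
    (hfeas : ∀ i j, f i + g j ≤ C i j)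
    (hopt : (∑ i, f i * a i) + (∑ j, g j * b j) = OTdual a b C)
    (ystar : Fin p) (hsupp : 0 < b ystar)
    (hmin : ∀ j, cz ystar - g ystar ≤ cz j - g j) :
    ζ * OTdual a b C + (1 - ζ) * (cz ystar - g ystar + ∑ j, g j * b j)
      ≤ OTdual (fun i : Option (Fin n) => i.elim (1 - ζ) (fun i' => ζ * a i')) b
          (fun i : Option (Fin n) => i.elim cz (fun i' => C i')) := by
  have ha' : ∀ i : Option (Fin n), 0 ≤ (i.elim (1 - ζ) (fun i' => ζ * a i')) := by
    rintro (_|i)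
    · simpa using by linarith
    · exact mul_nonneg hζ0 (ha i)
  have hsa' : ∑ i : Option (Fin n), (i.elim (1 - ζ) (fun i' => ζ * a i')) = 1 := by
    rw [Fintype.sum_option]
    simp only [Option.elim, ← Finset.mul_sum, hsa]
    ring
  have hbdd := OTdual_bdd _ b ha' hb hsa' hsb
    (fun i : Option (Fin n) => i.elim cz (fun i' => C i'))
  have hmem : ζ * OTdual a b C + (1 - ζ) * (cz ystar - g ystar + ∑ j, g j * b j)
      ∈ { v | ∃ (F : Option (Fin n) → ℝ) (G : Fin p → ℝ),
        (∀ i j, F i + G j ≤ (Option.elim i cz (fun i' => C i')) j) ∧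
        v = (∑ i, F i * (Option.elim i (1 - ζ) (fun i' => ζ * a i')))
          + (∑ j, G j * b j) } := by
    refine ⟨fun i => i.elim (cz ystar - g ystar) f, g, ?_, ?_⟩
    · rintro (_|i) j
      · simpa using by linarith [hmin j]
      · exact hfeas i j
    · rw [← hopt, Fintype.sum_option]
      simp only [Option.elim]
      have : ∑ i, f i * (ζ * a i) = ζ * ∑ i, f i * a i := by
        rw [Finset.mul_sum]; exact Finset.sum_congr rfl fun i _ => by ring
      rw [this]; ring
  exact le_csSup hbdd hmem
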